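/- Let X be a real Hilbert space and A, B nonempty closed convex subsets of X. If the interior of A ∩ B is nonempty, then the couple (A, B) is stable; that is, for every choice of sequences {A_n}, {B_n} of nonempty closed convex subsets of X Attouch-Wets converging to A and B respectively, and for every starting point a₀ ∈ X, the corresponding perturbed alternating projections sequences {a_n} and {b_n} converge in norm. -/
import Mathlib


open Filter Metric Topology

/-- Attouch–Wets convergence of a sequence of sets:
for every `N`, `sup_{‖x‖ ≤ N} |dist(x, Aₙ) − dist(x, L)| → 0`. -/
def AWTendsto {X : Type*} [NormedAddCommGroup X] (A : ℕ → Set X) (L : Set X) : Prop :=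
  ∀ N : ℕ, ∀ ε : ℝ, 0 < ε → ∃ n₀ : ℕ, ∀ n ≥ n₀, ∀ x : X, ‖x‖ ≤ (N : ℝ) →
    |Metric.infDist x (A n) - Metric.infDist x L| < ε

/-- `p` is a metric projection (nearest point) of `x` onto `K`. -/
def IsProjOn {X : Type*} [NormedAddCommGroup X] (K : Set X) (x p : X) : Prop :=
  p ∈ K ∧ ∀ y ∈ K, dist x p ≤ dist x y

/-- `a`, `b` are the perturbed alternating projections sequences w.r.t. `A`, `B`
with starting point `a₀`: `bₙ = P_{Bₙ}(a_{n−1})` and `aₙ = P_{Aₙ}(bₙ)` for `n ≥ 1`. -/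
def IsPerturbedAPS {X : Type*} [NormedAddCommGroup X]
    (A B : ℕ → Set X) (a₀ : X) (a b : ℕ → X) : Prop :=
  a 0 = a₀ ∧ ∀ n : ℕ,
    IsProjOn (B (n + 1)) (a n) (b (n + 1)) ∧ IsProjOn (A (n + 1)) (b (n + 1)) (a (n + 1))

/-- The couple `(A, B)` is stable: for every sequences of nonempty closed convex sets
Attouch–Wets converging to `A` and `B` respectively, and every starting point, the
corresponding perturbed alternating projections sequences converge in norm. -/
def StablePair {X : Type*} [NormedAddCommGroup X] [NormedSpace ℝ X] (A B : Set X) : Prop :=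
  ∀ An Bn : ℕ → Set X,
    (∀ n, (An n).Nonempty ∧ IsClosed (An n) ∧ Convex ℝ (An n)) →
    (∀ n, (Bn n).Nonempty ∧ IsClosed (Bn n) ∧ Convex ℝ (Bn n)) →
    AWTendsto An A → AWTendsto Bn B →
    ∀ a₀ : X, ∀ a b : ℕ → X, IsPerturbedAPS An Bn a₀ a b →
      (∃ la : X, Filter.Tendsto a Filter.atTop (nhds la)) ∧
      (∃ lb : X, Filter.Tendsto b Filter.atTop (nhds lb))


open Filter Metric Topology RealInnerProductSpace

def IsProjOn' {X : Type*} [NormedAddCommGroup X] (K : Set X) (x p : X) : Prop :=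
  p ∈ K ∧ ∀ y ∈ K, dist x p ≤ dist x y

/-- Variational inequality for metric projection onto a convex set. -/
lemma projVI' {X : Type*} [NormedAddCommGroup X] [InnerProductSpace ℝ X]
    {K : Set X} (hK : Convex ℝ K) {x p : X} (hp : IsProjOn' K x p) :
    ∀ w ∈ K, ⟪x - p, w - p⟫ ≤ 0 := by
  intro w hw
  by_contra hc
  push_neg at hc
  set c := ⟪x - p, w - p⟫ with hcdef
  set s := ‖w - p‖ ^ 2 with hsdef
  have hs : 0 ≤ s := sq_nonneg _
  have key : ∀ t : ℝ, 0 < t → t ≤ 1 → 2 * c ≤ t * s := by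
    intro t ht ht1
    have hmem : p + t • (w - p) ∈ K := by
      have h2 := hK hp.1 hw (by linarith : (0:ℝ) ≤ 1 - t) ht.le (by ring)
      have : (1 - t) • p + t • w = p + t • (w - p) := by module
      rwa [this] at h2
    have hle := hp.2 _ hmem
    rw [dist_eq_norm, dist_eq_norm] at hle
    have heq : x - (p + t • (w - p)) = (x - p) - t • (w - p) := by abel
    rw [heq] at hle
    have h2 : ‖x - p‖ ^ 2 ≤ ‖(x - p) - t • (w - p)‖ ^ 2 := by
      have := norm_nonneg ((x - p) - t • (w - p))
      nlinarith [norm_nonneg (x - p)]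
    have hexp : ‖(x - p) - t • (w - p)‖ ^ 2 = ‖x - p‖ ^ 2 - 2 * (t * c) + t ^ 2 * s := by
      rw [norm_sub_sq_real, real_inner_smul_right, norm_smul, Real.norm_eq_abs,
        abs_of_pos ht, mul_pow, hcdef, hsdef]
    nlinarith
  rcases eq_or_lt_of_le hs with hs0 | hs0
  · have := key 1 one_pos le_rfl
    nlinarith
  · have := key (min 1 (c / s)) (lt_min one_pos (div_pos hc hs0)) (min_le_left _ _)
    have h2 : min 1 (c / s) * s ≤ (c / s) * s := by
      apply mul_le_mul_of_nonneg_right (min_le_right _ _) hs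
    rw [div_mul_cancel₀ _ (ne_of_gt hs0)] at h2
    linarith

/-- Key inequality: projection onto a convex set containing a ball around `z`. -/
lemma key_ineq' {X : Type*} [NormedAddCommGroup X] [InnerProductSpace ℝ X]
    {K : Set X} (hK : Convex ℝ K) {z : X} {r : ℝ} (hr : 0 < r)
    (hball : Metric.closedBall z r ⊆ K) {x p : X} (hp : IsProjOn' K x p) :
    ‖p - z‖ ^ 2 + 2 * r * ‖x - p‖ ≤ ‖x - z‖ ^ 2 := by
  rcases eq_or_ne x p with h | h
  · rw [h]; simp
  · have hxp : 0 < ‖x - p‖ := norm_pos_iff.mpr (sub_ne_zero.mpr h)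
    set u := ‖x - p‖⁻¹ • (x - p) with hudef
    have hu : ‖u‖ = 1 := by
      rw [hudef, norm_smul, norm_inv, norm_norm, inv_mul_cancel₀ (ne_of_gt hxp)]
    have hw : z + r • u ∈ K := by
      apply hball
      simp only [Metric.mem_closedBall, dist_eq_norm]
      have : z + r • u - z = r • u := by abel
      rw [this, norm_smul, hu, Real.norm_eq_abs, abs_of_pos hr, mul_one]
    have hvi := projVI' hK hp _ hw
    have heq : (z + r • u) - p = (z - p) + r • u := by abel
    rw [heq, inner_add_right, real_inner_smul_right] at hvi
    have hinner : ⟪x - p, u⟫ = ‖x - p‖ := by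
      rw [hudef, real_inner_smul_right, real_inner_self_eq_norm_sq]
      field_simp
    rw [hinner] at hvi
    have hexp : ‖x - z‖ ^ 2 = ‖x - p‖ ^ 2 + 2 * ⟪x - p, p - z⟫ + ‖p - z‖ ^ 2 := by
      have h3 : x - z = (x - p) + (p - z) := by abel
      rw [h3, norm_add_sq_real]
    have h4 : ⟪x - p, p - z⟫ = - ⟪x - p, z - p⟫ := by
      rw [← inner_neg_right]; congr 1; abel
    nlinarith [sq_nonneg ‖x - p‖]

/-- If every point of the ball of radius `R` is within `δ` of the closed convex set `K`,
then the ball of radius `R - δ` is contained in `K`. -/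
lemma ball_subset_of_infDist_lt' {X : Type*} [NormedAddCommGroup X] [InnerProductSpace ℝ X]
    [CompleteSpace X] {K : Set X} (hne : K.Nonempty) (hc : IsClosed K) (hv : Convex ℝ K)
    {z : X} {R δ : ℝ} (hδ : 0 < δ)
    (h : ∀ x : X, dist x z ≤ R → Metric.infDist x K < δ) :
    Metric.closedBall z (R - δ) ⊆ K := by
  intro y hy
  by_contra hyK
  obtain ⟨p, hpK, hproj⟩ := exists_norm_eq_iInf_of_complete_convex hne hc.isComplete hv y
  have hisproj : IsProjOn' K y p := by
    refine ⟨hpK, fun w hw => ?_⟩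
    rw [dist_eq_norm, dist_eq_norm, hproj]
    exact ciInf_le ⟨0, Set.forall_mem_range.2 fun _ => norm_nonneg _⟩ (⟨w, hw⟩ : K)
  have hyp : y ≠ p := fun hh => hyK (hh ▸ hpK)
  have ht : 0 < ‖y - p‖ := norm_pos_iff.mpr (sub_ne_zero.mpr hyp)
  set u := ‖y - p‖⁻¹ • (y - p) with hudef
  have hu : ‖u‖ = 1 := by
    rw [hudef, norm_smul, norm_inv, norm_norm, inv_mul_cancel₀ (ne_of_gt ht)]
  set x := y + δ • u with hxdef
  have hx : dist x z ≤ R := by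
    rw [Metric.mem_closedBall] at hy
    calc dist x z ≤ dist x y + dist y z := dist_triangle _ _ _
    _ ≤ δ + (R - δ) := by
        apply add_le_add _ hy
        rw [dist_eq_norm, hxdef]
        have : y + δ • u - y = δ • u := by abel
        rw [this, norm_smul, hu, Real.norm_eq_abs, abs_of_pos hδ, mul_one]
    _ = R := by ring
  have hlow : δ ≤ Metric.infDist x K := by
    rw [Metric.infDist_eq_iInf]
    haveI := hne.to_subtype
    apply le_ciInf
    rintro ⟨w, hw⟩
    have hCS : ⟪u, x - w⟫ ≤ ‖x - w‖ := by
      calc ⟪u, x - w⟫ ≤ ‖u‖ * ‖x - w‖ := real_inner_le_norm _ _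
      _ = ‖x - w‖ := by rw [hu, one_mul]
    have hvi := projVI' hv hisproj w hw
    have hsplit : x - w = (y - w) + δ • u := by rw [hxdef]; abel
    have h1 : ⟪u, x - w⟫ = ⟪u, y - w⟫ + δ := by
      rw [hsplit, inner_add_right, real_inner_smul_right, real_inner_self_eq_norm_sq, hu]
      ring
    have h2 : ⟪u, y - w⟫ = ‖y - p‖⁻¹ * ⟪y - p, y - w⟫ := by
      rw [hudef, real_inner_smul_left]
    have h3 : ⟪y - p, y - w⟫ = ‖y - p‖ ^ 2 - ⟪y - p, w - p⟫ := by
      have : y - w = (y - p) - (w - p) := by abel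
      rw [this, inner_sub_right, real_inner_self_eq_norm_sq]
    have h4 : 0 ≤ ⟪u, y - w⟫ := by
      rw [h2, h3]
      have : 0 ≤ ‖y - p‖ ^ 2 - ⟪y - p, w - p⟫ := by nlinarith
      positivity
    show δ ≤ dist x w
    rw [dist_eq_norm]
    linarith [h1 ▸ hCS]
  exact absurd (h x hx) (not_lt.mpr hlow)

open Filter Metric Topology RealInnerProductSpace in
lemma eventually_ball_subset' {X : Type*} [NormedAddCommGroup X] [InnerProductSpace ℝ X]
    [CompleteSpace X] {An : ℕ → Set X} {A : Set X}
    (hAn : ∀ n, (An n).Nonempty ∧ IsClosed (An n) ∧ Convex ℝ (An n))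
    (hAW : AWTendsto An A) {z : X} {r : ℝ} (hr : 0 < r)
    (hball : Metric.ball z (4 * r) ⊆ A) :
    ∃ n₀ : ℕ, ∀ n ≥ n₀, Metric.closedBall z r ⊆ An n := by
  obtain ⟨n₀, hn₀⟩ := hAW ⌈‖z‖ + 4 * r⌉₊ r hr
  refine ⟨n₀, fun n hn => ?_⟩
  have key : Metric.closedBall z (2 * r - r) ⊆ An n := by
    apply ball_subset_of_infDist_lt' (hAn n).1 (hAn n).2.1 (hAn n).2.2 hr
    intro x hx
    have hxn : ‖x‖ ≤ (⌈‖z‖ + 4 * r⌉₊ : ℝ) := by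
      have h1 : ‖x‖ ≤ ‖x - z‖ + ‖z‖ := by simpa using norm_add_le (x - z) z
      rw [dist_eq_norm] at hx
      have h2 : ‖z‖ + 4 * r ≤ (⌈‖z‖ + 4 * r⌉₊ : ℝ) := Nat.le_ceil _
      linarith
    have hxA : x ∈ A := by
      apply hball
      rw [Metric.mem_ball]
      linarith
    have h3 := hn₀ n hn x hxn
    rw [Metric.infDist_zero_of_mem hxA, sub_zero] at h3
    exact lt_of_le_of_lt (le_abs_self _) h3
  have : (2 : ℝ) * r - r = r := by ring
  rwa [this] at key

theorem stmt2 {X : Type*} [NormedAddCommGroup X] [InnerProductSpace ℝ X] [CompleteSpace X]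
    (A B : Set X) (hAne : A.Nonempty) (hAc : IsClosed A) (hAv : Convex ℝ A)
    (hBne : B.Nonempty) (hBc : IsClosed B) (hBv : Convex ℝ B)
    (hint : (interior (A ∩ B)).Nonempty) :
    StablePair A B := by
  obtain ⟨z, hz⟩ := hint
  rw [mem_interior_iff_mem_nhds, Metric.mem_nhds_iff] at hz
  obtain ⟨ρ, hρ, hball⟩ := hz
  intro An Bn hAn hBn hAWA hAWB a₀ a b haps
  set r := ρ / 4 with hrdef
  have hr : 0 < r := by positivity
  have h4r : 4 * r = ρ := by rw [hrdef]; ring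
  obtain ⟨nA, hnA⟩ := eventually_ball_subset' hAn hAWA hr
    (fun x hx => (hball (by rwa [h4r] at hx)).1)
  obtain ⟨nB, hnB⟩ := eventually_ball_subset' hBn hAWB hr
    (fun x hx => (hball (by rwa [h4r] at hx)).2)
  set n₀ := max nA nB with hn₀def
  set D : ℕ → ℝ := fun k => ‖a (n₀ + k) - z‖ ^ 2 with hDdef
  set E : ℕ → ℝ := fun k => ‖b (n₀ + k + 1) - z‖ ^ 2 with hEdef
  -- step inequalities
  have hstep1 : ∀ k, E k + 2 * r * dist (a (n₀ + k)) (b (n₀ + k + 1)) ≤ D k := by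
    intro k
    obtain ⟨hb, _⟩ := haps.2 (n₀ + k)
    have hBball : Metric.closedBall z r ⊆ Bn (n₀ + k + 1) := hnB _ (by omega)
    have h1 := key_ineq' (hBn (n₀ + k + 1)).2.2 hr hBball hb
    rw [hDdef, hEdef, dist_eq_norm]
    simpa using h1
  have hstep2 : ∀ k, D (k + 1) + 2 * r * dist (b (n₀ + k + 1)) (a (n₀ + k + 1)) ≤ E k := by
    intro k
    obtain ⟨_, ha⟩ := haps.2 (n₀ + k)
    have hAball : Metric.closedBall z r ⊆ An (n₀ + k + 1) := hnA _ (by omega)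
    have h1 := key_ineq' (hAn (n₀ + k + 1)).2.2 hr hAball ha
    rw [hDdef, hEdef, dist_eq_norm]
    show ‖a (n₀ + (k + 1)) - z‖ ^ 2 + 2 * r * ‖b (n₀ + k + 1) - a (n₀ + k + 1)‖ ≤ _
    have hidx : n₀ + (k + 1) = n₀ + k + 1 := by omega
    rw [hidx]
    simpa using h1
  have hstepA : ∀ k, 2 * r * dist (a (n₀ + k)) (a (n₀ + k + 1)) ≤ D k - D (k + 1) := by
    intro k
    have h1 := hstep1 k
    have h2 := hstep2 k
    have htri : dist (a (n₀ + k)) (a (n₀ + k + 1)) ≤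
        dist (a (n₀ + k)) (b (n₀ + k + 1)) + dist (b (n₀ + k + 1)) (a (n₀ + k + 1)) :=
      dist_triangle _ _ _
    nlinarith
  have hDanti : ∀ k, D (k + 1) ≤ D k := by
    intro k
    have h1 := hstep1 k
    have h2 := hstep2 k
    have := dist_nonneg (x := a (n₀ + k)) (y := b (n₀ + k + 1))
    have := dist_nonneg (x := b (n₀ + k + 1)) (y := a (n₀ + k + 1))
    nlinarith
  have hmono : Antitone D := antitone_nat_of_succ_le hDanti
  have hD0 : ∀ k, 0 ≤ D k := fun k => sq_nonneg _
  have hbdd : BddBelow (Set.range D) := ⟨0, by rintro _ ⟨k, rfl⟩; exact hD0 k⟩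
  set L := ⨅ k, D k with hLdef
  have hL : Filter.Tendsto D Filter.atTop (nhds L) := tendsto_atTop_ciInf hmono hbdd
  have hLle : ∀ k, L ≤ D k := fun k => ciInf_le hbdd k
  -- chain bound for a
  have hchainA : ∀ n m : ℕ, n ≤ m → 2 * r * dist (a (n₀ + n)) (a (n₀ + m)) ≤ D n - D m := by
    intro n m h
    induction m, h using Nat.le_induction with
    | base => simp
    | succ m hm ih =>
      have h1 := hstepA m
      have htri : dist (a (n₀ + n)) (a (n₀ + (m + 1))) ≤
          dist (a (n₀ + n)) (a (n₀ + m)) + dist (a (n₀ + m)) (a (n₀ + m + 1)) := by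
        have hidx : n₀ + (m + 1) = n₀ + m + 1 := by omega
        rw [hidx]
        exact dist_triangle _ _ _
      nlinarith
  set bnd : ℕ → ℝ := fun N => 3 * (D N - L) / (2 * r) with hbnddef
  have hbnd0 : Filter.Tendsto bnd Filter.atTop (nhds 0) := by
    have h1 : Filter.Tendsto (fun N => 3 * (D N - L) / (2 * r)) Filter.atTop
        (nhds (3 * (L - L) / (2 * r))) := ((hL.sub_const L).const_mul 3).div_const _
    simpa using h1
  -- Cauchy for a
  have hcA : CauchySeq (fun k => a (n₀ + k)) := by
    apply cauchySeq_of_le_tendsto_0 bnd _ hbnd0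
    intro n m N hn hm
    rcases le_total n m with h | h
    · have := hchainA n m h
      have h2 : D n ≤ D N := hmono hn
      have h3 : L ≤ D m := hLle m
      have h4 : 0 ≤ D N - L := by linarith [hLle N, hmono hn]
      show dist (a (n₀ + n)) (a (n₀ + m)) ≤ 3 * (D N - L) / (2 * r)
      rw [le_div_iff₀ (by positivity : (0:ℝ) < 2 * r)]
      nlinarith
    · have := hchainA m n h
      have h2 : D m ≤ D N := hmono hm
      have h3 : L ≤ D n := hLle n
      have h4 : 0 ≤ D N - L := by linarith [hLle N, hmono hm]
      rw [dist_comm]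
      show dist (a (n₀ + m)) (a (n₀ + n)) ≤ 3 * (D N - L) / (2 * r)
      rw [le_div_iff₀ (by positivity : (0:ℝ) < 2 * r)]
      nlinarith
  -- Cauchy for b
  have hchainB : ∀ n m : ℕ, n ≤ m →
      2 * r * dist (b (n₀ + n + 1)) (b (n₀ + m + 1)) ≤ 3 * (D n - L) := by
    intro n m h
    have h1 := hstep2 n
    have h2 := hstep2 m
    have h3 := hstep1 m
    have h4 := hchainA (n + 1) (m + 1) (by omega)
    have htri : dist (b (n₀ + n + 1)) (b (n₀ + m + 1)) ≤
        dist (b (n₀ + n + 1)) (a (n₀ + n + 1)) + dist (a (n₀ + n + 1)) (a (n₀ + m + 1))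
          + dist (a (n₀ + m + 1)) (b (n₀ + m + 1)) := dist_triangle4 _ _ _ _
    have hidx1 : n₀ + (n + 1) = n₀ + n + 1 := by omega
    have hidx2 : n₀ + (m + 1) = n₀ + m + 1 := by omega
    rw [hidx1, hidx2] at h4
    have hEm : E m ≤ D m := by
      have := dist_nonneg (x := a (n₀ + m)) (y := b (n₀ + m + 1))
      nlinarith [hstep1 m]
    have hDm : D m ≤ D n := hmono h
    have hLn1 : L ≤ D (n + 1) := hLle (n + 1)
    have hLm1 : L ≤ D (m + 1) := hLle (m + 1)
    have hEn : E n ≤ D n := by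
      have := dist_nonneg (x := a (n₀ + n)) (y := b (n₀ + n + 1))
      nlinarith [hstep1 n]
    rw [dist_comm (a (n₀ + m + 1)) (b (n₀ + m + 1))] at htri
    have hDn1 : D (n + 1) ≤ D n := hDanti n
    nlinarith [mul_le_mul_of_nonneg_left htri (by positivity : (0:ℝ) ≤ 2 * r)]
  have hcB : CauchySeq (fun k => b (n₀ + k + 1)) := by
    apply cauchySeq_of_le_tendsto_0 bnd _ hbnd0
    intro n m N hn hm
    rcases le_total n m with h | h
    · have := hchainB n m h
      have h2 : D n ≤ D N := hmono hn
      have h3 : L ≤ D n := hLle n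
      show dist (b (n₀ + n + 1)) (b (n₀ + m + 1)) ≤ 3 * (D N - L) / (2 * r)
      rw [le_div_iff₀ (by positivity : (0:ℝ) < 2 * r)]
      nlinarith
    · have := hchainB m n h
      have h2 : D m ≤ D N := hmono hm
      have h3 : L ≤ D m := hLle m
      rw [dist_comm]
      show dist (b (n₀ + m + 1)) (b (n₀ + n + 1)) ≤ 3 * (D N - L) / (2 * r)
      rw [le_div_iff₀ (by positivity : (0:ℝ) < 2 * r)]
      nlinarith
  obtain ⟨la, hla⟩ := cauchySeq_tendsto_of_complete hcA
  obtain ⟨lb, hlb⟩ := cauchySeq_tendsto_of_complete hcB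
  constructor
  · refine ⟨la, ?_⟩
    rw [← Filter.tendsto_add_atTop_iff_nat n₀]
    exact hla.congr fun k => congrArg a (by omega)
  · refine ⟨lb, ?_⟩
    rw [← Filter.tendsto_add_atTop_iff_nat (n₀ + 1)]
    exact hlb.congr fun k => congrArg b (by omega)
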